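/- arXiv:2110.00633 — 3 statements merged into one kernel-verified Lean document; each statement's English description precedes it below -/
import Mathlib

section
/- Fix s, z > 0 and let c = min(|1 − s/z|, 1) and t = (1 + c)s. Define g(a) = max(z − a, min(s − z, z)) for a ≤ s and g(a) = 0 for s < a ≤ t, and define h(a) = z for a ≤ cs and h(a) = (z/s)(s − (a − cs)) for cs < a ≤ t. Then g(a) ≤ h(a) for all a ∈ (0, t). -/
/-! The estimate `c` is chosen so that `z * c = min |z - s| z` dominates both constant levels
`z - s` and `min (s - z) z`. Past `c * s` the shifted rank is the line of slope `-z / s` through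
`(c * s, z)`, i.e. `z * c + (z / s) * (s - a)`; on `(c * s, s]` the excess of `z - a` over
`(z / s) * (s - a)` is `(a / s) * (z - s) ≤ max (z - s) 0`, and beyond `s` the worst future rank
vanishes while the line stays positive up to `t`. -/

noncomputable def srptBWorstRank (s z a : ℝ) : ℝ := if a ≤ s then max (z - a) (min (s - z) z) else 0

noncomputable def srptSEShiftedRank (c s z a : ℝ) : ℝ := if a ≤ c * s then z else (z / s) * (s - (a - c * s))

variable {a c s z : ℝ}

theorem srptBWorstRank_le (ha : 0 ≤ a) (hz : 0 ≤ z) : srptBWorstRank s z a ≤ z := by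
  unfold srptBWorstRank
  split_ifs
  · exact max_le (by linarith) (min_le_right _ _)
  · exact hz

theorem max_sub_min_le_shifted_line (hs : 0 < s) (hz : 0 < z) (hc₁ : z - s ≤ z * c)
    (hc₂ : min (s - z) z ≤ z * c) (ha₀ : 0 ≤ a) (has : a ≤ s) :
    max (z - a) (min (s - z) z) ≤ (z / s) * (s - (a - c * s)) := by
  have hline : (z / s) * (s - (a - c * s)) = z * c + (z / s) * (s - a) := by
    field_simp
    ring
  have hslope : 0 ≤ (z / s) * (s - a) := by
    have := sub_nonneg.2 has
    positivity
  rw [hline]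
  refine max_le ?_ (by linarith)
  have hexcess : z - a - (z / s) * (s - a) = (a / s) * (z - s) := by
    field_simp
    ring
  have hfrac : a / s ≤ 1 := (div_le_one hs).2 has
  have hfrac₀ : 0 ≤ a / s := by positivity
  rcases le_total z s with hzs | hzs
  · have : (a / s) * (z - s) ≤ 0 := mul_nonpos_of_nonneg_of_nonpos hfrac₀ (by linarith)
    have : 0 ≤ z * c := le_trans (le_min (by linarith) hz.le) hc₂
    linarith
  · have : (a / s) * (z - s) ≤ z - s := mul_le_of_le_one_left (by linarith) hfrac
    linarith

theorem srptBWorstRank_le_srptSEShiftedRank (hs : 0 < s) (hz : 0 < z) (hc₁ : z - s ≤ z * c)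
    (hc₂ : min (s - z) z ≤ z * c) (ha₀ : 0 < a) (hat : a < (1 + c) * s) :
    srptBWorstRank s z a ≤ srptSEShiftedRank c s z a := by
  unfold srptSEShiftedRank
  split_ifs
  · exact srptBWorstRank_le ha₀.le hz.le
  unfold srptBWorstRank
  split_ifs with has
  · exact max_sub_min_le_shifted_line hs hz hc₁ hc₂ ha₀.le has
  · have : 0 ≤ s - (a - c * s) := by linarith
    positivity

theorem mul_min_abs_one_sub_div_one (hz : 0 < z) :
    z * min |1 - s / z| 1 = min |z - s| z := by
  have : z * |1 - s / z| = |z - s| := by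
    rw [← abs_of_pos hz, ← abs_mul, abs_of_pos hz, mul_sub, mul_one, mul_div_cancel₀ _ hz.ne']
  rw [mul_min_of_nonneg _ _ hz.le, this, mul_one]

theorem stmt_3 (s z : ℝ) (hs : 0 < s) (hz : 0 < z) :
    let c := min |1 - s / z| 1
    let t := (1 + c) * s
    let g : ℝ → ℝ := fun a => if a ≤ s then max (z - a) (min (s - z) z) else 0
    let h : ℝ → ℝ := fun a => if a ≤ c * s then z else (z / s) * (s - (a - c * s))
    ∀ a ∈ Set.Ioo (0:ℝ) t, g a ≤ h a := by
  intro c t g h a ⟨ha₀, hat⟩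
  have hzc : z * c = min |z - s| z := mul_min_abs_one_sub_div_one hz
  have hc₁ : z - s ≤ z * c := hzc ▸ le_min (le_abs_self _) (by linarith)
  have hc₂ : min (s - z) z ≤ z * c := hzc ▸ min_le_min_right z (neg_sub z s ▸ neg_le_abs _)
  exact srptBWorstRank_le_srptSEShiftedRank hs hz hc₁ hc₂ ha₀ hat
end

section
/- Let S, Z be nonnegative random variables with Z ≥ βS almost surely for some β ∈ (0, 1], and fix z > 0. Then E[(max(0, min(S − (Z − z), 2z))² − ((S/Z)z)²)·1(Z > z)] ≤ 3z·max(1 − β, 0)·E[S·1(Z > z)]. -/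
open MeasureTheory

/- On `{Z > z}` the clipped remaining size `A = max 0 (min (S - (Z - z)) (2z))` and the scaled
size `B = (S / Z) z` satisfy `A ≤ B` when the job is overestimated (`S ≤ Z`), and otherwise
`B ≥ z` while `A = z + d` with `0 ≤ d ≤ min (S - Z) z`, so `A² - B² ≤ 2zd + d² ≤ 3z (S - Z)`.
The estimate bound `βS ≤ Z` turns `S - Z` into at most `(1 - β) S`; integrating the pointwise
bound over `{Z > z}` gives the claim. -/

lemma sq_clip_sub_sq_scaled_le {S Z z : ℝ} (hz : 0 < z) (hzZ : z < Z) (hS : 0 ≤ S) :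
    (max 0 (min (S - (Z - z)) (2 * z)))^2 - ((S / Z) * z)^2 ≤ 3 * z * max (S - Z) 0 := by
  have hZ : 0 < Z := hz.trans hzZ
  have hrhs : 0 ≤ 3 * z * max (S - Z) 0 := by positivity
  rcases le_or_gt S Z with hSZ | hZS
  · have hclip : max 0 (min (S - (Z - z)) (2 * z)) ≤ S / Z * z := by
      refine max_le (by positivity) ((min_le_left _ _).trans ?_)
      rw [div_mul_eq_mul_div, le_div_iff₀ hZ]
      nlinarith [mul_nonneg (sub_nonneg.mpr hSZ) (sub_nonneg.mpr hzZ.le)]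
    have := pow_le_pow_left₀ (le_max_left _ _) hclip 2
    linarith
  · set d := min (S - Z) z with hd
    have hd0 : 0 ≤ d := le_min (sub_nonneg.mpr hZS.le) hz.le
    have hclip : max 0 (min (S - (Z - z)) (2 * z)) = d + z := by
      have hmin : min (S - (Z - z)) (2 * z) = d + z := by
        rw [hd, ← min_add_add_right]; ring_nf
      rw [hmin, max_eq_right (by linarith)]
    have hscaled : z ≤ S / Z * z :=
      le_mul_of_one_le_left hz.le ((one_le_div hZ).mpr hZS.le)
    have := pow_le_pow_left₀ hz.le hscaled 2
    rw [hclip, max_eq_left (sub_nonneg.mpr hZS.le)]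
    nlinarith [min_le_left (S - Z) z, min_le_right (S - Z) z]

lemma max_sub_zero_le_of_mul_le {S Z β : ℝ} (hS : 0 ≤ S) (hest : β * S ≤ Z) :
    max (S - Z) 0 ≤ max (1 - β) 0 * S :=
  max_le (by nlinarith [le_max_left (1 - β) 0]) (by positivity)

theorem stmt_6_general {Ω : Type*} [MeasureSpace Ω] (μ : Measure Ω)
    (S Z : Ω → ℝ) (β z : ℝ) (hz : 0 < z)
    (hS : ∀ᵐ ω ∂μ, 0 ≤ S ω)
    (hest : ∀ᵐ ω ∂μ, β * S ω ≤ Z ω)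
    (hint1 : Integrable (fun ω =>
      ((max 0 (min (S ω - (Z ω - z)) (2 * z)))^2 - ((S ω / Z ω) * z)^2)
        * (if z < Z ω then 1 else 0)) μ)
    (hint2 : Integrable (fun ω => S ω * (if z < Z ω then 1 else 0)) μ) :
    ∫ ω, ((max 0 (min (S ω - (Z ω - z)) (2 * z)))^2 - ((S ω / Z ω) * z)^2)
        * (if z < Z ω then 1 else 0) ∂μ
      ≤ 3 * z * max (1 - β) 0 * ∫ ω, S ω * (if z < Z ω then 1 else 0) ∂μ := by
  rw [← integral_const_mul]
  refine integral_mono_ae hint1 (hint2.const_mul _) ?_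
  filter_upwards [hS, hest] with ω hSω hestω
  split_ifs with hzZ
  · calc _ ≤ 3 * z * max (S ω - Z ω) 0 := by
          simpa using sq_clip_sub_sq_scaled_le hz hzZ hSω
      _ ≤ 3 * z * (max (1 - β) 0 * S ω) := by
          gcongr; exact max_sub_zero_le_of_mul_le hSω hestω
      _ = _ := by ring
  · simp

theorem stmt_6 {Ω : Type*} [MeasureSpace Ω] (μ : Measure Ω) [IsProbabilityMeasure μ]
    (S Z : Ω → ℝ) (β z : ℝ) (hβ : 0 < β) (hβ1 : β ≤ 1) (hz : 0 < z)
    (hS : ∀ᵐ ω ∂μ, 0 ≤ S ω) (hZ : ∀ᵐ ω ∂μ, 0 ≤ Z ω)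
    (hest : ∀ᵐ ω ∂μ, β * S ω ≤ Z ω)
    (hint1 : Integrable (fun ω =>
      ((max 0 (min (S ω - (Z ω - z)) (2 * z)))^2 - ((S ω / Z ω) * z)^2)
        * (if z < Z ω then 1 else 0)) μ)
    (hint2 : Integrable (fun ω => S ω * (if z < Z ω then 1 else 0)) μ) :
    ∫ ω, ((max 0 (min (S ω - (Z ω - z)) (2 * z)))^2 - ((S ω / Z ω) * z)^2)
        * (if z < Z ω then 1 else 0) ∂μ
      ≤ 3 * z * max (1 - β) 0 * ∫ ω, S ω * (if z < Z ω then 1 else 0) ∂μ :=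
  stmt_6_general μ S Z β z hz hS hest hint1 hint2
end

section
/- Let ρ_Z : [0, ∞) → [0, ρ) be nondecreasing with ρ_Z(z) = λ∫₀^z m(z')f(z')dz', where m(z) = E[S | Z = z] ≥ 0, f is the density of Z, λ > 0, and ρ = λE[S] < 1. Then ∫₀^∞ (λ m(z) f(z) / (1 − ρ_Z(z))²) · (∫_z^∞ m(z')f(z')dz') dz = ((1/ρ)·ln(1/(1−ρ)) − 1)·E[S]. -/
open MeasureTheory Set
open scoped NNReal ENNReal

theorem stmt_7 (lam ES ρ : ℝ) (m f ρZ : ℝ → ℝ)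
    (hlam : 0 < lam) (hm : ∀ z, 0 ≤ m z) (hf : ∀ z, 0 ≤ f z)
    (hES : ES = ∫ z in Set.Ioi (0:ℝ), m z * f z)
    (hρ : ρ = lam * ES) (hρ1 : ρ < 1)
    (hρZ : ∀ z, ρZ z = lam * ∫ z' in Set.Ioc (0:ℝ) z, m z' * f z')
    (hmono : MonotoneOn ρZ (Set.Ici (0:ℝ)))
    (hrange : ∀ z, 0 ≤ z → 0 ≤ ρZ z ∧ ρZ z < ρ) :
    ∫ z in Set.Ioi (0:ℝ),
        (lam * m z * f z / (1 - ρZ z)^2) * (∫ z' in Set.Ioi z, m z' * f z')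
      = ((1 / ρ) * Real.log (1 / (1 - ρ)) - 1) * ES := by
  set g : ℝ → ℝ := fun z => m z * f z with hg_def
  have hg_nonneg : ∀ z, 0 ≤ g z := fun z => mul_nonneg (hm z) (hf z)
  -- ρZ vanishes on nonpositives
  have hρZneg : ∀ z ≤ (0:ℝ), ρZ z = 0 := by
    intro z hz
    rw [hρZ z, Set.Ioc_eq_empty (not_lt.2 hz), Measure.restrict_empty,
      integral_zero_measure, mul_zero]
  have hρ0 : ρZ 0 = 0 := hρZneg 0 le_rfl
  have hρpos : 0 < ρ := hρ0 ▸ (hrange 0 le_rfl).2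
  have hlam' : lam ≠ 0 := hlam.ne'
  have hESpos : 0 < ES := by
    rcases (mul_pos_iff.1 (hρ ▸ hρpos)) with ⟨_, h⟩ | ⟨h, _⟩
    · exact h
    · linarith
  -- integrability of g on (0, ∞)
  have hInt : IntegrableOn g (Set.Ioi (0:ℝ)) := by
    by_contra h
    rw [integral_undef h] at hES
    exact absurd hES hESpos.ne'
  set g0 : ℝ → ℝ := (Set.Ioi (0:ℝ)).indicator g with hg0_def
  have hg0Int : Integrable g0 := (integrable_indicator_iff measurableSet_Ioi).2 hInt
  have hg0_nonneg : ∀ z, 0 ≤ g0 z := fun z => Set.indicator_nonneg (fun x _ => hg_nonneg x) z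
  -- ρZ as a primitive of g0
  have hρZ' : ∀ z, ρZ z = lam * ∫ x in (0:ℝ)..z, g0 x := by
    intro z
    rcases le_or_gt 0 z with hz | hz
    · rw [hρZ z, intervalIntegral.integral_of_le hz, hg0_def, setIntegral_indicator measurableSet_Ioi,
        Set.inter_eq_left.2 Set.Ioc_subset_Ioi_self]
    · rw [hρZneg z hz.le, intervalIntegral.integral_of_ge hz.le, hg0_def,
        setIntegral_indicator measurableSet_Ioi,
        show Set.Ioc z 0 ∩ Set.Ioi 0 = (∅ : Set ℝ) by
          ext x; simp only [Set.mem_inter_iff, Set.mem_Ioc, Set.mem_Ioi, Set.mem_empty_iff_false,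
            iff_false]; rintro ⟨⟨_, h2⟩, h3⟩; linarith]
      simp
  have hcont : Continuous ρZ := by
    rw [show ρZ = fun z => lam * ∫ x in (0:ℝ)..z, g0 x from funext hρZ']
    exact continuous_const.mul
      (intervalIntegral.continuous_primitive (fun a b => hg0Int.intervalIntegrable) 0)
  have hmonoG : Monotone ρZ := by
    intro a b hab
    rw [hρZ' a, hρZ' b]
    have hadd : (∫ x in (0:ℝ)..a, g0 x) + ∫ x in a..b, g0 x = ∫ x in (0:ℝ)..b, g0 x :=
      intervalIntegral.integral_add_adjacent_intervals hg0Int.intervalIntegrable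
        hg0Int.intervalIntegrable
    have hnn : 0 ≤ ∫ x in a..b, g0 x :=
      intervalIntegral.integral_nonneg hab (fun u _ => hg0_nonneg u)
    exact mul_le_mul_of_nonneg_left (by linarith) hlam.le
  have hρZ_nonneg : ∀ z, 0 ≤ ρZ z := by
    intro z
    rcases le_or_gt z 0 with hz | hz
    · rw [hρZneg z hz]
    · exact (hrange z hz.le).1
  have hρZ_lt : ∀ z, ρZ z < ρ := by
    intro z
    rcases le_or_gt z 0 with hz | hz
    · rw [hρZneg z hz]; exact hρpos
    · exact (hrange z hz.le).2
  have hρZ_lt1 : ∀ z, ρZ z < 1 := fun z => (hρZ_lt z).trans hρ1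
  -- tendsto ρ at infinity
  have hU : ⋃ n : ℕ, Set.Ioc (0:ℝ) n = Set.Ioi 0 := by
    ext x
    simp only [Set.mem_iUnion, Set.mem_Ioc, Set.mem_Ioi]
    constructor
    · rintro ⟨n, h1, _⟩; exact h1
    · intro hx; obtain ⟨n, hn⟩ := exists_nat_ge x; exact ⟨n, hx, hn⟩
  have htend : Filter.Tendsto (fun n : ℕ => ρZ n) Filter.atTop (nhds ρ) := by
    have h1 := tendsto_setIntegral_of_monotone (f := g) (μ := volume)
      (s := fun n : ℕ => Set.Ioc (0:ℝ) n) (fun i => measurableSet_Ioc)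
      (fun i j hij => Set.Ioc_subset_Ioc_right (Nat.cast_le.2 hij)) (hU ▸ hInt)
    rw [hU] at h1
    have h2 := h1.const_mul lam
    rw [← hES] at h2
    simp only [← hρZ, ← hρ] at h2
    exact h2
  have hex : ∀ u, u < ρ → ∃ n : ℕ, u < ρZ n := fun u hu =>
    (htend.eventually (eventually_gt_nhds hu)).exists
  -- the measure with density lam * g on (0, ∞)
  set ν : Measure ℝ :=
    (volume.restrict (Set.Ioi (0:ℝ))).withDensity
      (fun z => ((Real.toNNReal (lam * g z) : ℝ≥0) : ℝ≥0∞)) with hν_def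
  have hν_apply : ∀ s : Set ℝ, MeasurableSet s →
      ν s = ∫⁻ z in s ∩ Set.Ioi 0, ENNReal.ofReal (lam * g z) := by
    intro s hs
    rw [hν_def, withDensity_apply _ hs, Measure.restrict_restrict hs]
    rfl
  have hνIic : ∀ t : ℝ, ν (Set.Iic t) = ENNReal.ofReal (ρZ t) := by
    intro t
    rw [hν_apply _ measurableSet_Iic,
      show Set.Iic t ∩ Set.Ioi 0 = Set.Ioc 0 t by ext x; simp [Set.mem_Ioc, and_comm]]
    rw [← ofReal_integral_eq_lintegral_ofReal
      ((hInt.mono_set Set.Ioc_subset_Ioi_self).const_mul lam)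
      (Filter.Eventually.of_forall fun z => mul_nonneg hlam.le (hg_nonneg z)),
      integral_const_mul, ← hρZ]
  have hνuniv : ν Set.univ = ENNReal.ofReal ρ := by
    rw [hν_apply _ MeasurableSet.univ, Set.univ_inter,
      ← ofReal_integral_eq_lintegral_ofReal (hInt.const_mul lam)
        (Filter.Eventually.of_forall fun z => mul_nonneg hlam.le (hg_nonneg z)),
      integral_const_mul, ← hES, ← hρ]
  have hνfin : IsFiniteMeasure ν := ⟨by rw [hνuniv]; exact ENNReal.ofReal_lt_top⟩
  -- pushforward of ν under ρZ is Lebesgue on (0, ρ]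
  have hmap : Measure.map ρZ ν = volume.restrict (Set.Ioc 0 ρ) := by
    refine Measure.ext_of_Iic _ _ (fun u => ?_)
    rw [Measure.map_apply hcont.measurable measurableSet_Iic,
      Measure.restrict_apply measurableSet_Iic]
    rcases lt_or_ge u 0 with hu | hu
    · rw [show ρZ ⁻¹' Set.Iic u = (∅ : Set ℝ) by
        ext z; simp only [Set.mem_preimage, Set.mem_Iic, Set.mem_empty_iff_false, iff_false,
          not_le]; exact hu.trans_le (hρZ_nonneg z)]
      rw [show Set.Iic u ∩ Set.Ioc 0 ρ = (∅ : Set ℝ) by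
        ext x; simp only [Set.mem_inter_iff, Set.mem_Iic, Set.mem_Ioc, Set.mem_empty_iff_false,
          iff_false, not_and, not_le]; intro h1 h2; linarith]
      simp
    rcases lt_or_ge u ρ with hu2 | hu2
    · -- main case : 0 ≤ u < ρ
      set S : Set ℝ := ρZ ⁻¹' Set.Iic u with hS_def
      have hSne : S.Nonempty := ⟨0, by simp [hS_def, hρ0, hu]⟩
      obtain ⟨n, hn⟩ := hex u hu2
      have hSbdd : BddAbove S := ⟨n, fun z hz => by
        by_contra h
        push_neg at h
        exact absurd (le_trans (hmonoG h.le) hz) (not_le.2 hn)⟩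
      have hSclosed : IsClosed S := IsClosed.preimage hcont isClosed_Iic
      set zu := sSup S with hzu_def
      have hzu_mem : zu ∈ S := hSclosed.csSup_mem hSne hSbdd
      have h1 : ρZ zu ≤ u := hzu_mem
      have h2 : u ≤ ρZ zu := by
        by_contra h
        push_neg at h
        have hopen : IsOpen {z : ℝ | ρZ z < u} := isOpen_lt hcont continuous_const
        obtain ⟨ε, hε, hball⟩ := Metric.isOpen_iff.1 hopen zu h
        have hmem2 : zu + ε / 2 ∈ Metric.ball zu ε := by
          rw [Metric.mem_ball, Real.dist_eq, show zu + ε / 2 - zu = ε / 2 by ring,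
            abs_of_pos (by linarith)]
          linarith
        have hin : zu + ε / 2 ∈ S := by
          have := hball hmem2
          simp only [Set.mem_setOf_eq] at this
          exact Set.mem_preimage.2 (Set.mem_Iic.2 this.le)
        have := le_csSup hSbdd hin
        linarith
      have hρZzu : ρZ zu = u := le_antisymm h1 h2
      have hSeq : S = Set.Iic zu := by
        ext z
        constructor
        · exact fun hz => le_csSup hSbdd hz
        · intro hz
          exact le_trans (hmonoG hz) h1
      rw [hSeq, hνIic, hρZzu]
      rw [show Set.Iic u ∩ Set.Ioc 0 ρ = Set.Ioc 0 u by
        ext x; simp only [Set.mem_inter_iff, Set.mem_Iic, Set.mem_Ioc]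
        constructor
        · rintro ⟨h1, h2, h3⟩; exact ⟨h2, h1⟩
        · rintro ⟨h1', h2'⟩; exact ⟨h2', h1', h2'.trans hu2.le⟩]
      rw [Real.volume_Ioc, sub_zero]
    · -- u ≥ ρ
      rw [show ρZ ⁻¹' Set.Iic u = Set.univ by
        ext z; simp only [Set.mem_preimage, Set.mem_Iic, Set.mem_univ, iff_true]
        exact ((hρZ_lt z).trans_le hu2).le]
      rw [hνuniv]
      rw [show Set.Iic u ∩ Set.Ioc 0 ρ = Set.Ioc 0 ρ from
        Set.inter_eq_right.2 (fun x hx => hx.2.trans hu2)]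
      rw [Real.volume_Ioc, sub_zero]
  set φ : ℝ → ℝ := fun u => (ρ - u) / (1 - u)^2 with hφ_def
  have hφmeas : Measurable φ :=
    (measurable_const.sub measurable_id).div ((measurable_const.sub measurable_id).pow_const 2)
  have hAEg : AEMeasurable (fun z => Real.toNNReal (lam * g z))
      (volume.restrict (Set.Ioi (0:ℝ))) :=
    measurable_real_toNNReal.comp_aemeasurable
      (aemeasurable_const.mul hInt.aestronglyMeasurable.aemeasurable)
  -- pointwise identity for the integrand
  have hstep1 : ∀ z ∈ Set.Ioi (0:ℝ),
      (lam * m z * f z / (1 - ρZ z)^2) * (∫ z' in Set.Ioi z, m z' * f z')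
        = lam⁻¹ * ((Real.toNNReal (lam * g z) : ℝ) * φ (ρZ z)) := by
    intro z hz
    have hz' : (0:ℝ) < z := hz
    have hsplit : (∫ z' in Set.Ioc (0:ℝ) z, g z') + (∫ z' in Set.Ioi z, g z') = ES := by
      rw [← setIntegral_union (Set.Ioc_disjoint_Ioi le_rfl) measurableSet_Ioi
        (hInt.mono_set Set.Ioc_subset_Ioi_self) (hInt.mono_set (Set.Ioi_subset_Ioi hz'.le)),
        Set.Ioc_union_Ioi_eq_Ioi hz'.le, hES]
    have hIoc : ∫ z' in Set.Ioc (0:ℝ) z, g z' = ρZ z / lam := by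
      rw [hρZ z]; field_simp
    have htail : ∫ z' in Set.Ioi z, g z' = ES - ρZ z / lam := by
      rw [← hsplit, hIoc]; ring
    have h1 : (1 : ℝ) - ρZ z ≠ 0 := by have := hρZ_lt1 z; intro h; linarith
    show (lam * m z * f z / (1 - ρZ z)^2) * (∫ z' in Set.Ioi z, g z')
        = lam⁻¹ * ((Real.toNNReal (lam * g z) : ℝ) * φ (ρZ z))
    rw [htail, Real.coe_toNNReal _ (mul_nonneg hlam.le (hg_nonneg z)), hφ_def, hρ, hg_def]
    field_simp
  -- FTC computation
  have hρ1' : (1:ℝ) - ρ ≠ 0 := by linarith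
  have hFTC : ∫ u in (0:ℝ)..ρ, φ u
      = (((ρ-1)/(1-ρ) - Real.log (1-ρ)) - ((ρ-1)/(1-0) - Real.log (1-0))) := by
    apply intervalIntegral.integral_eq_sub_of_hasDerivAt
      (f := fun u : ℝ => (ρ-1)/(1-u) - Real.log (1-u))
    · intro x hx
      rw [Set.uIcc_of_le hρpos.le] at hx
      have hx1 : (1:ℝ) - x ≠ 0 := by have := hx.2; intro hc; linarith
      have h0 : HasDerivAt (fun u : ℝ => 1 - u) (-1) x := (hasDerivAt_id x).const_sub 1
      have hd1 : HasDerivAt (fun u : ℝ => (ρ-1)/(1-u)) ((ρ-1)/(1-x)^2) x := by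
        have := (hasDerivAt_const x (ρ-1)).div h0 hx1
        convert this using 1
        · rfl
        · rfl
        · rfl
        ring
      have hd2 : HasDerivAt (fun u : ℝ => Real.log (1-u)) (-1/(1-x)) x := h0.log hx1
      have := hd1.sub hd2
      convert this using 1
      · rfl
      rw [hφ_def]
      field_simp
      ring
    · apply ContinuousOn.intervalIntegrable
      apply ContinuousOn.div
      · exact (continuous_const.sub continuous_id).continuousOn
      · exact ((continuous_const.sub continuous_id).pow 2).continuousOn
      · intro x hx
        rw [Set.uIcc_of_le hρpos.le] at hx
        have hq : (0:ℝ) < 1 - x := by have := hx.2; linarith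
        positivity
  calc ∫ z in Set.Ioi (0:ℝ),
        (lam * m z * f z / (1 - ρZ z)^2) * (∫ z' in Set.Ioi z, m z' * f z')
      = ∫ z in Set.Ioi (0:ℝ), lam⁻¹ * ((Real.toNNReal (lam * g z) : ℝ) * φ (ρZ z)) :=
        setIntegral_congr_fun measurableSet_Ioi hstep1
    _ = lam⁻¹ * ∫ z in Set.Ioi (0:ℝ), (Real.toNNReal (lam * g z) : ℝ) * φ (ρZ z) :=
        integral_const_mul _ _
    _ = lam⁻¹ * ∫ z, φ (ρZ z) ∂ν := by
        congr 1
        rw [hν_def, integral_withDensity_eq_integral_smul₀ hAEg]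
        simp only [NNReal.smul_def, smul_eq_mul]
    _ = lam⁻¹ * ∫ u in Set.Ioc (0:ℝ) ρ, φ u := by
        congr 1
        rw [← hmap, integral_map hcont.measurable.aemeasurable hφmeas.aestronglyMeasurable]
    _ = lam⁻¹ * ∫ u in (0:ℝ)..ρ, φ u := by
        rw [intervalIntegral.integral_of_le hρpos.le]
    _ = ((1 / ρ) * Real.log (1 / (1 - ρ)) - 1) * ES := by
        rw [hFTC]
        have hESeq : ES = ρ / lam := by rw [hρ]; field_simp
        rw [hESeq, one_div (1-ρ), Real.log_inv]
        norm_num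
        field_simp
        ring
end
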